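/- arXiv:2108.07078 — 2 statements merged into one kernel-verified Lean document; each statement's English description precedes it below -/
import Mathlib

section
/- Let n ≥ 2 and let m_1, m_2 ∈ {0, …, ⌊n/2⌋}. Then the minimum of |D_1(θ,η)| + |D_2(θ,η)| over all θ ∈ {0,1}^n with Σ_i θ_i = m_1 and all η ∈ {0,1}^n with Σ_i η_i = m_2 equals |m_1 − m_2|·(n − |m_1 − m_2|). -/
open Finset Real Filter

/-- The set of potential edges of an `n`-vertex graph: pairs `(i,j)` with `i < j`. -/
abbrev Edge (n : ℕ) := {e : Fin n × Fin n // e.1 < e.2}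

/-- An observed graph: an edge indicator for each potential edge. -/
abbrev ObsGraph (n : ℕ) := Edge n → Bool

/-- Edge probability under assignment `θ`: `p` within communities, `q` between. -/
noncomputable def edgeProb {n : ℕ} (p q : ℝ) (θ : Fin n → Bool) (e : Edge n) : ℝ :=
  if θ e.val.1 = θ e.val.2 then p else q

/-- Probability mass function of the observed graph under `θ`. -/
noncomputable def graphPMF {n : ℕ} (p q : ℝ) (θ : Fin n → Bool) (x : ObsGraph n) : ℝ :=
  ∏ e : Edge n, if x e then edgeProb p q θ e else 1 - edgeProb p q θ e

/-- Hellinger affinity of Bernoulli parameters. -/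
noncomputable def rho (p q : ℝ) : ℝ := Real.sqrt (p * q) + Real.sqrt ((1 - p) * (1 - q))

/-- Edges whose probability changes from `p` to `q` when replacing `θ` by `η`. -/
def D1 {n : ℕ} (θ η : Fin n → Bool) : Finset (Fin n × Fin n) :=
  Finset.univ.filter fun e => e.1 < e.2 ∧ θ e.1 = θ e.2 ∧ η e.1 ≠ η e.2

/-- Edges whose probability changes from `q` to `p` when replacing `θ` by `η`. -/
def D2 {n : ℕ} (θ η : Fin n → Bool) : Finset (Fin n × Fin n) :=
  Finset.univ.filter fun e => e.1 < e.2 ∧ θ e.1 ≠ θ e.2 ∧ η e.1 = η e.2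

/-- Hamming distance. -/
def hdist {n : ℕ} (θ η : Fin n → Bool) : ℕ := (Finset.univ.filter fun i => θ i ≠ η i).card

/-- The metric `k(θ,η) = h(θ,η) ∧ (n - h(θ,η))`. -/
def kdist {n : ℕ} (θ η : Fin n → Bool) : ℕ := min (hdist θ η) (n - hdist θ η)

/-- Size of the smallest community. -/
def countOnes {n : ℕ} (θ : Fin n → Bool) : ℕ := (Finset.univ.filter fun i => θ i = true).card

/-- The parameter space `Θ_n`. -/
def Theta (n : ℕ) : Finset (Fin n → Bool) :=
  Finset.univ.filter fun θ => 2 * countOnes θ ≤ n ∧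
    ∀ i : Fin n, 2 * countOnes θ = n → (i : ℕ) = 0 → θ i = false

/-- Posterior mass of `A ⊆ Θ_n` given data `x`, under prior mass function `π`. -/
noncomputable def postMass {n : ℕ} (p q : ℝ) (pri : (Fin n → Bool) → ℝ)
    (A : Finset (Fin n → Bool)) (x : ObsGraph n) : ℝ :=
  (∑ η ∈ A, pri η * graphPMF p q η x) / (∑ η ∈ Theta n, pri η * graphPMF p q η x)

/-- `P_θ`-expectation of the posterior mass of `A`. -/
noncomputable def expPostMass {n : ℕ} (p q : ℝ) (pri : (Fin n → Bool) → ℝ)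
    (θ : Fin n → Bool) (A : Finset (Fin n → Bool)) : ℝ :=
  ∑ x : ObsGraph n, graphPMF p q θ x * postMass p q pri A x

/-- The uniform prior on `Θ_n`. -/
noncomputable def unifPrior (n : ℕ) : (Fin n → Bool) → ℝ := fun _ => ((2:ℝ) ^ (n - 1))⁻¹

/-- Hamming ball `B_n(θ,k)` inside `Θ_n`. -/
def hball {n : ℕ} (θ : Fin n → Bool) (k : ℕ) : Finset (Fin n → Bool) :=
  (Theta n).filter fun η => kdist η θ ≤ k

/-!
A pair `i < j` lies in `D1 θ η ∪ D2 θ η` exactly when `θ` and `η` agree at one of `i, j` and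
disagree at the other, so `|D1| + |D2| = h (n - h)` with `h` the Hamming distance of `θ` and `η`.
Counting ones gives `|m1 - m2| ≤ h ≤ m1 + m2 ≤ n - |m1 - m2|`, and on that range `h (n - h)` is
smallest at `h = |m1 - m2|`, which the initial segments `{i < m1}` and `{i < m2}` attain.
-/

theorem card_filter_lt_and_ne_eq_mul {α : Type*} [Fintype α] [LinearOrder α] (f : α → Bool) :
    #{e : α × α | e.1 < e.2 ∧ f e.1 ≠ f e.2} = #{a | f a = true} * #{a | f a = false} := by
  rw [← card_product]
  -- orient each pair so that its `true` end comes first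
  refine card_nbij' (fun e => if f e.1 then e else e.swap)
    (fun e => if e.1 < e.2 then e else e.swap) ?_ ?_ ?_ ?_ <;>
  · rintro ⟨a, b⟩ h
    cases ha : f a <;> cases hb : f b <;> rcases lt_trichotomy a b with hab | rfl | hab <;>
      simp_all [lt_asymm]

theorem Nat.mul_tsub_le_mul_tsub {n s t : ℕ} (hts : t ≤ s) (hsn : s + t ≤ n) :
    t * (n - t) ≤ s * (n - s) := by
  -- `s (n - s) - t (n - t) = (s - t) (n - s - t)`
  obtain ⟨k, rfl⟩ := Nat.exists_eq_add_of_le hts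
  obtain ⟨l, rfl⟩ := Nat.exists_eq_add_of_le hsn
  rw [show t + k + t + l - t = t + k + l by omega, show t + k + t + l - (t + k) = t + l by omega]
  nlinarith

section Hamming

variable {n : ℕ}

theorem D1_union_D2 (θ η : Fin n → Bool) :
    D1 θ η ∪ D2 θ η =
      ({e | e.1 < e.2 ∧ (θ e.1 != η e.1) ≠ (θ e.2 != η e.2)} : Finset (Fin n × Fin n)) := by
  ext ⟨i, j⟩
  simp only [D1, D2, mem_union, mem_filter, mem_univ, true_and]
  cases θ i <;> cases θ j <;> cases η i <;> cases η j <;> simp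

theorem disjoint_D1_D2 (θ η : Fin n → Bool) : Disjoint (D1 θ η) (D2 θ η) :=
  disjoint_filter.2 fun _ _ h₁ h₂ => h₂.2.1 h₁.2.1

theorem card_D1_add_card_D2 (θ η : Fin n → Bool) :
    #(D1 θ η) + #(D2 θ η) = hdist θ η * (n - hdist θ η) := by
  rw [← card_union_of_disjoint (disjoint_D1_D2 θ η), D1_union_D2,
    card_filter_lt_and_ne_eq_mul fun i => θ i != η i]
  congr 1
  · simp [hdist]
  · simpa [hdist] using
      eq_tsub_of_add_eq (card_filter_add_card_filter_not (s := univ) fun i => θ i = η i)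

def ones (θ : Fin n → Bool) : Finset (Fin n) := {i | θ i = true}

theorem countOnes_eq_card_ones (θ : Fin n → Bool) : countOnes θ = #(ones θ) := rfl

theorem hdist_eq_card_sdiff_add_card_sdiff (θ η : Fin n → Bool) :
    hdist θ η = #(ones θ \ ones η) + #(ones η \ ones θ) := by
  rw [hdist, ← card_union_of_disjoint disjoint_sdiff_sdiff]
  congr 1
  ext i
  simp only [ones, mem_filter, mem_union, Finset.mem_sdiff, mem_univ, true_and]
  cases θ i <;> cases η i <;> decide

theorem dist_countOnes_le_hdist (θ η : Fin n → Bool) :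
    Nat.dist (countOnes θ) (countOnes η) ≤ hdist θ η := by
  have := le_card_sdiff (ones η) (ones θ)
  have := le_card_sdiff (ones θ) (ones η)
  rw [hdist_eq_card_sdiff_add_card_sdiff, countOnes_eq_card_ones, countOnes_eq_card_ones, Nat.dist]
  omega

theorem hdist_le_countOnes_add_countOnes (θ η : Fin n → Bool) :
    hdist θ η ≤ countOnes θ + countOnes η := by
  rw [hdist_eq_card_sdiff_add_card_sdiff]
  exact add_le_add (card_le_card sdiff_subset) (card_le_card sdiff_subset)

def initSeg (n m : ℕ) : Fin n → Bool := fun i => decide (i.val < m)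

theorem ones_initSeg (m : ℕ) : ones (initSeg n m) = ({i | i < m} : Finset (Fin n)) := by
  simp [ones, initSeg]

theorem countOnes_initSeg {m : ℕ} (hm : m ≤ n) : countOnes (initSeg n m) = m := by
  rw [countOnes_eq_card_ones, ones_initSeg, Fin.card_filter_val_lt, min_eq_right hm]

theorem hdist_initSeg {m₁ m₂ : ℕ} (h₁ : m₁ ≤ n) (h₂ : m₂ ≤ n) :
    hdist (initSeg n m₁) (initSeg n m₂) = Nat.dist m₁ m₂ := by
  rw [hdist_eq_card_sdiff_add_card_sdiff, ones_initSeg, ones_initSeg, card_sdiff, card_sdiff,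
    ← filter_and, ← filter_and]
  simp only [← lt_min_iff, Fin.card_filter_val_lt, Nat.dist]
  omega

end Hamming

theorem stmt1_general (n : ℕ) (m1 m2 : ℕ) (hm1 : m1 ≤ n / 2) (hm2 : m2 ≤ n / 2) :
    IsLeast {d : ℕ | ∃ θ η : Fin n → Bool, countOnes θ = m1 ∧ countOnes η = m2 ∧
        d = (D1 θ η).card + (D2 θ η).card}
      (Nat.dist m1 m2 * (n - Nat.dist m1 m2)) := by
  refine ⟨⟨initSeg n m1, initSeg n m2, countOnes_initSeg (by omega), countOnes_initSeg (by omega),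
    by rw [card_D1_add_card_D2, hdist_initSeg (by omega) (by omega)]⟩, ?_⟩
  rintro d ⟨θ, η, rfl, rfl, rfl⟩
  have hle := hdist_le_countOnes_add_countOnes θ η
  rw [card_D1_add_card_D2]
  exact Nat.mul_tsub_le_mul_tsub (dist_countOnes_le_hdist θ η) (by unfold Nat.dist at *; omega)

/-- the minimum of `|D_1(θ,η)| + |D_2(θ,η)|` over `θ` with `m_1` ones and
`η` with `m_2` ones equals `|m_1 − m_2|·(n − |m_1 − m_2|)`. -/
theorem stmt1 (n : ℕ) (hn : 2 ≤ n) (m1 m2 : ℕ) (hm1 : m1 ≤ n / 2) (hm2 : m2 ≤ n / 2) :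
    IsLeast {d : ℕ | ∃ θ η : Fin n → Bool, countOnes θ = m1 ∧ countOnes η = m2 ∧
        d = (D1 θ η).card + (D2 θ η).card}
      (Nat.dist m1 m2 * (n - Nat.dist m1 m2)) :=
  stmt1_general n m1 m2 hm1 hm2
end

section
/- Let n ≥ 2, p, q ∈ (0,1), let π be a prior mass function on Θ_n with π(θ) > 0 for all θ ∈ Θ_n, fix θ ∈ Θ_n, and let S ⊆ Θ_n \ {θ} be non-empty. Set d = min_{η ∈ S} |D_1(θ,η) ∪ D_2(θ,η)|. Then the P_θ-expectation of the posterior mass of S satisfies P_θ Π(S | X^n) ≤ ρ(p,q)^d · Σ_{η ∈ S} √(π(η)/π(θ)). -/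
/-!
For each `η ∈ S` the posterior mass of `{η}` is at most `min 1 r ≤ √r` with
`r = π(η) p_η(x) / (π(θ) p_θ(x))`, hence `p_θ(x) Π(S | x) ≤ ∑_η √(π(η)/π(θ)) √(p_θ(x) p_η(x))`.
Summed over `x`, the Hellinger affinity of the two product laws factors over the edges: an edge
contributes `1` when `θ` and `η` agree on whether its endpoints share a community and `ρ(p,q) ≤ 1`
otherwise, which gives `ρ(p,q) ^ |D₁ ∪ D₂| ≤ ρ(p,q) ^ d`.
-/

open Finset Real Filter

section HellingerAffinity

theorem sum_sqrt_prod_mul_prod {ι β : Type*} [Fintype ι] [DecidableEq ι] [Fintype β]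
    (f g : ι → β → ℝ) (hf : ∀ i b, 0 ≤ f i b) (hg : ∀ i b, 0 ≤ g i b) :
    ∑ x : ι → β, √((∏ i, f i (x i)) * ∏ i, g i (x i)) = ∏ i, ∑ b, √(f i b * g i b) := by
  rw [Fintype.prod_sum]
  refine sum_congr rfl fun x _ => ?_
  rw [← prod_mul_distrib, Real.sqrt_prod _ fun i _ => mul_nonneg (hf i _) (hg i _)]

def bernoulliMass (a : ℝ) (b : Bool) : ℝ := if b then a else 1 - a

theorem bernoulliMass_nonneg {a : ℝ} (ha : a ∈ Set.Icc (0 : ℝ) 1) (b : Bool) :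
    0 ≤ bernoulliMass a b := by
  cases b <;> simp [bernoulliMass, ha.1, ha.2]

theorem sum_bernoulliMass (a : ℝ) : ∑ b, bernoulliMass a b = 1 := by
  simp [bernoulliMass]

theorem sum_sqrt_bernoulliMass_mul (a c : ℝ) :
    ∑ b, √(bernoulliMass a b * bernoulliMass c b) = rho a c := by
  simp [bernoulliMass, rho]

theorem rho_comm (p q : ℝ) : rho p q = rho q p := by
  simp only [rho, mul_comm]

theorem rho_self {a : ℝ} (ha : a ∈ Set.Icc (0 : ℝ) 1) : rho a a = 1 := by
  rw [rho, Real.sqrt_mul_self ha.1, Real.sqrt_mul_self (sub_nonneg.2 ha.2)]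
  ring

theorem rho_nonneg (p q : ℝ) : 0 ≤ rho p q := by
  unfold rho; positivity

theorem rho_le_one {p q : ℝ} (hp : p ∈ Set.Icc (0 : ℝ) 1) (hq : q ∈ Set.Icc (0 : ℝ) 1) :
    rho p q ≤ 1 :=
  calc rho p q
      = ∑ b, √(bernoulliMass p b) * √(bernoulliMass q b) := by
        simp_rw [← sum_sqrt_bernoulliMass_mul, Real.sqrt_mul (bernoulliMass_nonneg hp _)]
    _ ≤ √(∑ b, bernoulliMass p b) * √(∑ b, bernoulliMass q b) :=
        Real.sum_sqrt_mul_sqrt_le _ (bernoulliMass_nonneg hp) (bernoulliMass_nonneg hq)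
    _ = 1 := by rw [sum_bernoulliMass, sum_bernoulliMass, Real.sqrt_one, one_mul]

end HellingerAffinity

section StochasticBlockModel

variable {n : ℕ} {p q : ℝ}

theorem graphPMF_eq_prod_bernoulliMass (θ : Fin n → Bool) (x : ObsGraph n) :
    graphPMF p q θ x = ∏ e, bernoulliMass (edgeProb p q θ e) (x e) :=
  rfl

theorem edgeProb_mem_Icc (hp : p ∈ Set.Icc (0 : ℝ) 1) (hq : q ∈ Set.Icc (0 : ℝ) 1)
    (θ : Fin n → Bool) (e : Edge n) : edgeProb p q θ e ∈ Set.Icc (0 : ℝ) 1 := by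
  unfold edgeProb; split_ifs <;> assumption

theorem rho_edgeProb (hp : p ∈ Set.Icc (0 : ℝ) 1) (hq : q ∈ Set.Icc (0 : ℝ) 1)
    (θ η : Fin n → Bool) (e : Edge n) :
    rho (edgeProb p q θ e) (edgeProb p q η e)
      = if (θ e.1.1 = θ e.1.2 ↔ η e.1.1 = η e.1.2) then 1 else rho p q := by
  unfold edgeProb
  by_cases hθ : θ e.1.1 = θ e.1.2 <;> by_cases hη : η e.1.1 = η e.1.2 <;>
    simp [hθ, hη, rho_self hp, rho_self hq, rho_comm q p]

theorem card_D1_union_D2 (θ η : Fin n → Bool) :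
    #(D1 θ η ∪ D2 θ η) = #{e : Edge n | ¬(θ e.1.1 = θ e.1.2 ↔ η e.1.1 = η e.1.2)} := by
  rw [← card_map (Function.Embedding.subtype _)]
  congr 1
  ext ⟨i, j⟩
  simp only [D1, D2, mem_union, mem_filter, mem_univ, true_and, Finset.mem_map,
    Function.Embedding.subtype_apply]
  constructor
  · rintro (⟨h, h1, h2⟩ | ⟨h, h1, h2⟩) <;> exact ⟨⟨(i, j), h⟩, by tauto, rfl⟩
  · rintro ⟨⟨e, he⟩, h, rfl⟩
    by_cases h1 : θ i = θ j <;> tauto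

theorem sum_sqrt_graphPMF_mul (hp : p ∈ Set.Icc (0 : ℝ) 1) (hq : q ∈ Set.Icc (0 : ℝ) 1)
    (θ η : Fin n → Bool) :
    ∑ x : ObsGraph n, √(graphPMF p q θ x * graphPMF p q η x) = rho p q ^ #(D1 θ η ∪ D2 θ η) := by
  have hmass : ∀ (ζ : Fin n → Bool) (e : Edge n) b, 0 ≤ bernoulliMass (edgeProb p q ζ e) b := fun ζ e =>
    bernoulliMass_nonneg (edgeProb_mem_Icc hp hq ζ e)
  simp only [graphPMF_eq_prod_bernoulliMass]
  rw [sum_sqrt_prod_mul_prod _ _ (hmass θ) (hmass η)]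
  simp only [sum_sqrt_bernoulliMass_mul, rho_edgeProb hp hq, prod_ite, prod_const_one, one_mul,
    prod_const, card_D1_union_D2]

theorem graphPMF_pos (hp : p ∈ Set.Ioo (0 : ℝ) 1) (hq : q ∈ Set.Ioo (0 : ℝ) 1)
    (θ : Fin n → Bool) (x : ObsGraph n) : 0 < graphPMF p q θ x := by
  refine prod_pos fun e _ => ?_
  unfold edgeProb
  split_ifs <;> linarith [hp.1, hp.2, hq.1, hq.2]

end StochasticBlockModel

theorem div_sum_le_sqrt_div {ι : Type*} {t : Finset ι} {w : ι → ℝ} (hw : ∀ k ∈ t, 0 ≤ w k)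
    {i j : ι} (hi : i ∈ t) (hj : j ∈ t) (hwj : 0 < w j) :
    w i / ∑ k ∈ t, w k ≤ √(w i / w j) := by
  have hjD : w j ≤ ∑ k ∈ t, w k := single_le_sum hw hj
  have hD : 0 < ∑ k ∈ t, w k := hwj.trans_le hjD
  have hx0 : 0 ≤ w i / ∑ k ∈ t, w k := div_nonneg (hw i hi) hD.le
  have hx1 : w i / ∑ k ∈ t, w k ≤ 1 := div_le_one_of_le₀ (single_le_sum hw hi) hD.le
  refine Real.le_sqrt_of_sq_le ?_
  calc (w i / ∑ k ∈ t, w k) ^ 2 ≤ w i / ∑ k ∈ t, w k := by nlinarith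
    _ ≤ w i / w j := div_le_div_of_nonneg_left (hw i hi) hwj hjD

section Posterior

variable {n : ℕ} {p q : ℝ} {pri : (Fin n → Bool) → ℝ} {θ : Fin n → Bool}
  {S : Finset (Fin n → Bool)}

theorem graphPMF_mul_postMass_le (hp : p ∈ Set.Ioo (0 : ℝ) 1) (hq : q ∈ Set.Ioo (0 : ℝ) 1)
    (hpri : ∀ η ∈ Theta n, 0 < pri η) (hθ : θ ∈ Theta n) (hS : S ⊆ Theta n)
    (x : ObsGraph n) :
    graphPMF p q θ x * postMass p q pri S x
      ≤ ∑ η ∈ S, √(pri η / pri θ) * √(graphPMF p q θ x * graphPMF p q η x) := by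
  have hθx := graphPMF_pos hp hq θ x
  have hw : ∀ η ∈ Theta n, 0 < pri η * graphPMF p q η x := fun η hη =>
    mul_pos (hpri η hη) (graphPMF_pos hp hq η x)
  rw [postMass, sum_div, mul_sum]
  refine sum_le_sum fun η hη => ?_
  calc graphPMF p q θ x * (pri η * graphPMF p q η x
          / ∑ ζ ∈ Theta n, pri ζ * graphPMF p q ζ x)
      ≤ graphPMF p q θ x * √(pri η * graphPMF p q η x / (pri θ * graphPMF p q θ x)) :=
        mul_le_mul_of_nonneg_left
          (div_sum_le_sqrt_div (fun ζ hζ => (hw ζ hζ).le) (hS hη) hθ (hw θ hθ)) hθx.le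
    _ = √(pri η / pri θ) * √(graphPMF p q θ x * graphPMF p q η x) := by
        rw [← Real.sqrt_mul (div_nonneg (hpri η (hS hη)).le (hpri θ hθ).le),
          ← Real.sqrt_sq hθx.le, ← Real.sqrt_mul (sq_nonneg _), Real.sqrt_sq hθx.le]
        congr 1
        field_simp

theorem expPostMass_le_sum_sqrt_prior_ratio_mul (hp : p ∈ Set.Ioo (0 : ℝ) 1)
    (hq : q ∈ Set.Ioo (0 : ℝ) 1) (hpri : ∀ η ∈ Theta n, 0 < pri η) (hθ : θ ∈ Theta n)
    (hS : S ⊆ Theta n) :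
    expPostMass p q pri θ S ≤ ∑ η ∈ S, √(pri η / pri θ) * rho p q ^ #(D1 θ η ∪ D2 θ η) :=
  calc expPostMass p q pri θ S
      ≤ ∑ x : ObsGraph n, ∑ η ∈ S,
          √(pri η / pri θ) * √(graphPMF p q θ x * graphPMF p q η x) :=
        sum_le_sum fun x _ => graphPMF_mul_postMass_le hp hq hpri hθ hS x
    _ = ∑ η ∈ S, √(pri η / pri θ) * ∑ x, √(graphPMF p q θ x * graphPMF p q η x) := by
        rw [sum_comm]
        simp_rw [mul_sum]
    _ = _ := by
        simp_rw [sum_sqrt_graphPMF_mul (Set.Ioo_subset_Icc_self hp) (Set.Ioo_subset_Icc_self hq)]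

end Posterior

theorem stmt5_general (n : ℕ) (p q : ℝ) (hp : p ∈ Set.Ioo (0:ℝ) 1)
    (hq : q ∈ Set.Ioo (0:ℝ) 1) (pri : (Fin n → Bool) → ℝ)
    (hpri : ∀ θ ∈ Theta n, 0 < pri θ)
    (θ : Fin n → Bool) (hθ : θ ∈ Theta n)
    (S : Finset (Fin n → Bool)) (hS : S ⊆ Theta n \ {θ}) (hSne : S.Nonempty)
    (d : ℕ) (hd : d = S.inf' hSne fun η => (D1 θ η ∪ D2 θ η).card) :
    expPostMass p q pri θ S
      ≤ rho p q ^ d * ∑ η ∈ S, Real.sqrt (pri η / pri θ) := by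
  have hρ_le_one := rho_le_one (Set.Ioo_subset_Icc_self hp) (Set.Ioo_subset_Icc_self hq)
  calc expPostMass p q pri θ S
      ≤ ∑ η ∈ S, √(pri η / pri θ) * rho p q ^ #(D1 θ η ∪ D2 θ η) :=
        expPostMass_le_sum_sqrt_prior_ratio_mul hp hq hpri hθ (hS.trans sdiff_subset)
    _ ≤ ∑ η ∈ S, √(pri η / pri θ) * rho p q ^ d := by
        refine sum_le_sum fun η hη => mul_le_mul_of_nonneg_left ?_ (Real.sqrt_nonneg _)
        exact pow_le_pow_of_le_one (rho_nonneg p q) hρ_le_one (hd ▸ inf'_le _ hη)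
    _ = _ := by rw [← sum_mul, mul_comm]

/-- posterior mass bound
`P_θ Π(S | X^n) ≤ ρ(p,q)^d Σ_{η ∈ S} √(π(η)/π(θ))`. -/
theorem stmt5 (n : ℕ) (hn : 2 ≤ n) (p q : ℝ) (hp : p ∈ Set.Ioo (0:ℝ) 1)
    (hq : q ∈ Set.Ioo (0:ℝ) 1) (pri : (Fin n → Bool) → ℝ)
    (hpri : ∀ θ ∈ Theta n, 0 < pri θ)
    (θ : Fin n → Bool) (hθ : θ ∈ Theta n)
    (S : Finset (Fin n → Bool)) (hS : S ⊆ Theta n \ {θ}) (hSne : S.Nonempty)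
    (d : ℕ) (hd : d = S.inf' hSne fun η => (D1 θ η ∪ D2 θ η).card) :
    expPostMass p q pri θ S
      ≤ rho p q ^ d * ∑ η ∈ S, Real.sqrt (pri η / pri θ) :=
  stmt5_general n p q hp hq pri hpri θ hθ S hS hSne d hd
end
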